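/- Let X = (X_1, …, X_K) be a square-integrable random vector in ℝ^K with mean vector μ = (μ_1, …, μ_K). For u, v ∈ B₁⁺ define Ξ_u(v) ∈ [0, ∞] by Ξ_u(v) := max{ Var(⟨u, X⟩ − ⟨v, X⟩) / (⟨v, μ⟩ − ⟨u, μ⟩)² , 3‖u − v‖₁ / (⟨v, μ⟩ − ⟨u, μ⟩) } if ⟨v, μ⟩ > ⟨u, μ⟩, and Ξ_u(v) := +∞ otherwise. Then for every i ∈ {1, …, K} and every u, v ∈ B₁⁺ whose supports are contained in {1, …, K} \ {i}: Ξ_{e_i}(v) ≤ max{ Ξ_{e_i}(u), Ξ_u(v) }, where e_i is the i-th standard basis vector (which lies in B₁⁺). -/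

import Mathlib

open MeasureTheory ProbabilityTheory ENNReal

/-!
Write `e = e_i` and `a < b < c` for `⟨e, μ⟩`, `⟨u, μ⟩`, `⟨v, μ⟩` (otherwise the right-hand
side is `∞`). The gap `c - a` splits as `(b - a) + (c - b)` and, by Minkowski's
inequality in `L²`, the standard deviation of `⟨e - v, X⟩` is at most the sum of those of
`⟨e - u, X⟩` and `⟨u - v, X⟩`; the mediant inequality then bounds the variance ratio by the
larger of the two others. Since `u` and `v` avoid `i`, `‖e - u‖₁ = ‖e - v‖₁ = 2`, so the
`ℓ¹` ratio only decreases when the gap grows from `b - a` to `c - a`.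
-/

section Mediant

variable {α : Type*} [Field α] [LinearOrder α] [IsStrictOrderedRing α]

theorem add_div_add_le_max_div {x y s t : α} (hs : 0 < s) (ht : 0 < t) :
    (x + y) / (s + t) ≤ max (x / s) (y / t) := by
  have hx : x ≤ max (x / s) (y / t) * s := (div_le_iff₀ hs).1 (le_max_left _ _)
  have hy : y ≤ max (x / s) (y / t) * t := (div_le_iff₀ ht).1 (le_max_right _ _)
  rw [div_le_iff₀ (add_pos hs ht), mul_add]
  exact add_le_add hx hy

end Mediant

namespace ProbabilityTheory

variable {Ω : Type*} [MeasurableSpace Ω] {μ : Measure Ω}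

theorem variance_eq_toReal_eLpNorm_sq (X : Ω → ℝ) :
    Var[X; μ] = (eLpNorm (fun ω => X ω - μ[X]) 2 μ).toReal ^ 2 := by
  rw [variance, ← ENNReal.toReal_pow, eLpNorm_eq_lintegral_rpow_enorm_toReal two_ne_zero
    ENNReal.ofNat_ne_top, ← ENNReal.rpow_natCast, ← ENNReal.rpow_mul]
  norm_num
  rfl

theorem sqrt_variance_eq_toReal_eLpNorm (X : Ω → ℝ) :
    √Var[X; μ] = (eLpNorm (fun ω => X ω - μ[X]) 2 μ).toReal := by
  rw [variance_eq_toReal_eLpNorm_sq, Real.sqrt_sq ENNReal.toReal_nonneg]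

variable [IsFiniteMeasure μ] {Y Z : Ω → ℝ}

theorem sqrt_variance_add_le (hY : MemLp Y 2 μ) (hZ : MemLp Z 2 μ) :
    √Var[Y + Z; μ] ≤ √Var[Y; μ] + √Var[Z; μ] := by
  have hY' : MemLp (fun ω => Y ω - μ[Y]) 2 μ := hY.sub (memLp_const _)
  have hZ' : MemLp (fun ω => Z ω - μ[Z]) 2 μ := hZ.sub (memLp_const _)
  have hcenter : (fun ω => (Y + Z) ω - μ[Y + Z]) =
      (fun ω => Y ω - μ[Y]) + (fun ω => Z ω - μ[Z]) := by
    rw [integral_add' (hY.integrable one_le_two) (hZ.integrable one_le_two)]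
    funext ω
    simp only [Pi.add_apply]
    ring
  rw [sqrt_variance_eq_toReal_eLpNorm, sqrt_variance_eq_toReal_eLpNorm,
    sqrt_variance_eq_toReal_eLpNorm, hcenter,
    ← ENNReal.toReal_add hY'.eLpNorm_ne_top hZ'.eLpNorm_ne_top]
  exact ENNReal.toReal_mono (add_ne_top.2 ⟨hY'.eLpNorm_ne_top, hZ'.eLpNorm_ne_top⟩)
    (eLpNorm_add_le hY'.aestronglyMeasurable hZ'.aestronglyMeasurable one_le_two)

theorem variance_add_div_sq_le_max (hY : MemLp Y 2 μ) (hZ : MemLp Z 2 μ) {s t : ℝ}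
    (hs : 0 < s) (ht : 0 < t) :
    Var[Y + Z; μ] / (s + t) ^ 2 ≤ max (Var[Y; μ] / s ^ 2) (Var[Z; μ] / t ^ 2) := by
  have hsq (W : Ω → ℝ) (r : ℝ) : Var[W; μ] / r ^ 2 = (√Var[W; μ] / r) ^ 2 := by
    rw [div_pow, Real.sq_sqrt (variance_nonneg W μ)]
  have hsd : √Var[Y + Z; μ] / (s + t) ≤ max (√Var[Y; μ] / s) (√Var[Z; μ] / t) :=
    (div_le_div_of_nonneg_right (sqrt_variance_add_le hY hZ) (add_pos hs ht).le).trans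
      (add_div_add_le_max_div hs ht)
  rw [hsq, hsq, hsq]
  rcases le_max_iff.1 hsd with h | h
  · exact le_max_of_le_left (by gcongr)
  · exact le_max_of_le_right (by gcongr)

end ProbabilityTheory

theorem sum_abs_single_one_sub_eq_two {ι : Type*} [Fintype ι] [DecidableEq ι] {i : ι}
    {w : ι → ℝ} (hw : ∀ l, 0 ≤ w l) (hw_sum : ∑ l, w l = 1) (hwi : w i = 0) :
    ∑ l, |(Pi.single i 1 : ι → ℝ) l - w l| = 2 := by
  have hterm (l : ι) :
      |(Pi.single i 1 : ι → ℝ) l - w l| = (Pi.single i 1 : ι → ℝ) l + w l := by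
    rcases eq_or_ne l i with rfl | hl
    · simp [hwi]
    · simp [hl, abs_of_nonneg (hw l)]
  rw [Finset.sum_congr rfl fun l _ => hterm l, Finset.sum_add_distrib, hw_sum,
    Finset.sum_pi_single']
  norm_num

theorem ultrametric_Xi_general {Ω : Type*} [MeasurableSpace Ω]
    (P : Measure Ω) [IsProbabilityMeasure P] (K : ℕ)
    (X : Fin K → Ω → ℝ) (hX : ∀ i, MemLp (X i) 2 P)
    (μ : Fin K → ℝ)
    (Ξ : (Fin K → ℝ) → (Fin K → ℝ) → ℝ≥0∞)
    (hΞ : ∀ u v : Fin K → ℝ, Ξ u v =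
      if (∑ l, u l * μ l) < (∑ l, v l * μ l) then
        ENNReal.ofReal (max
          (variance (fun ω => (∑ l, u l * X l ω) - (∑ l, v l * X l ω)) P /
            ((∑ l, v l * μ l) - (∑ l, u l * μ l)) ^ 2)
          (3 * (∑ l, |u l - v l|) / ((∑ l, v l * μ l) - (∑ l, u l * μ l))))
      else ⊤)
    (i : Fin K) (u v : Fin K → ℝ)
    (hu_nonneg : ∀ l, 0 ≤ u l) (hu_sum : ∑ l, u l = 1)
    (hv_nonneg : ∀ l, 0 ≤ v l) (hv_sum : ∑ l, v l = 1)
    (hu_supp : u i = 0) (hv_supp : v i = 0) :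
    Ξ (Pi.single i 1) v ≤ max (Ξ (Pi.single i 1) u) (Ξ u v) := by
  set e : Fin K → ℝ := Pi.single i 1
  set S : (Fin K → ℝ) → Ω → ℝ := fun w ω => ∑ l, w l * X l ω
  have hS (w : Fin K → ℝ) : MemLp (S w) 2 P :=
    memLp_finsetSum _ fun l _ => (hX l).const_mul (w l)
  rw [hΞ, hΞ, hΞ]
  by_cases hab : ∑ l, e l * μ l < ∑ l, u l * μ l
  swap; · simp [hab]
  by_cases hbc : ∑ l, u l * μ l < ∑ l, v l * μ l
  swap; · simp [hbc]
  rw [if_pos (hab.trans hbc), if_pos hab, if_pos hbc, ← ENNReal.ofReal_max]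
  refine ENNReal.ofReal_le_ofReal (max_le ?_ ?_)
  · have hsplit :
        (fun ω => S e ω - S v ω) = (fun ω => S e ω - S u ω) + fun ω => S u ω - S v ω := by
      funext ω
      simp only [Pi.add_apply]
      ring
    rw [hsplit, ← sub_add_sub_cancel (∑ l, v l * μ l) (∑ l, u l * μ l), add_comm (_ - _)]
    exact (variance_add_div_sq_le_max ((hS e).sub (hS u)) ((hS u).sub (hS v))
      (sub_pos.2 hab) (sub_pos.2 hbc)).trans (max_le_max (le_max_left _ _) (le_max_left _ _))
  · rw [sum_abs_single_one_sub_eq_two hv_nonneg hv_sum hv_supp,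
      sum_abs_single_one_sub_eq_two hu_nonneg hu_sum hu_supp]
    exact le_max_of_le_left <| le_max_of_le_right <|
      div_le_div_of_nonneg_left (by norm_num) (sub_pos.2 hab) (by linarith)

/-- Ultra-metric type property of the quantities `Ξ_u(v)` for comparisons with
convex combinations of the arms: for `u, v` in the probability simplex supported
away from `i`, `Ξ_{e_i}(v) ≤ max (Ξ_{e_i}(u)) (Ξ_u(v))`. -/
theorem ultrametric_Xi {Ω : Type*} [MeasurableSpace Ω]
    (P : Measure Ω) [IsProbabilityMeasure P] (K : ℕ)
    (X : Fin K → Ω → ℝ) (hX : ∀ i, MemLp (X i) 2 P)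
    (μ : Fin K → ℝ) (hμ : ∀ i, μ i = ∫ ω, X i ω ∂P)
    (Ξ : (Fin K → ℝ) → (Fin K → ℝ) → ℝ≥0∞)
    (hΞ : ∀ u v : Fin K → ℝ, Ξ u v =
      if (∑ l, u l * μ l) < (∑ l, v l * μ l) then
        ENNReal.ofReal (max
          (variance (fun ω => (∑ l, u l * X l ω) - (∑ l, v l * X l ω)) P /
            ((∑ l, v l * μ l) - (∑ l, u l * μ l)) ^ 2)
          (3 * (∑ l, |u l - v l|) / ((∑ l, v l * μ l) - (∑ l, u l * μ l))))
      else ⊤)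
    (i : Fin K) (u v : Fin K → ℝ)
    (hu_nonneg : ∀ l, 0 ≤ u l) (hu_sum : ∑ l, u l = 1)
    (hv_nonneg : ∀ l, 0 ≤ v l) (hv_sum : ∑ l, v l = 1)
    (hu_supp : u i = 0) (hv_supp : v i = 0) :
    Ξ (Pi.single i 1) v ≤ max (Ξ (Pi.single i 1) u) (Ξ u v) :=
  ultrametric_Xi_general P K X hX μ Ξ hΞ i u v hu_nonneg hu_sum hv_nonneg hv_sum hu_supp hv_supp
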